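/- arXiv:2411.19863 — 10 statements merged into one kernel-verified Lean document; each statement's English description precedes it below -/
import Mathlib

section
/- Let H be a Heyting algebra and w ∈ H. Then w is widespread if and only if for every v ∈ H one has ⊤ ≤ v ⊔ (v ⇨ w). -/
open CategoryTheory Opposite

universe w v u

namespace PaperEtendue

/-- An element `w` of a Heyting algebra is *widespread* if the lattice of elements
above `w` is complemented. -/
def Widespread {H : Type u} [HeytingAlgebra H] (w : H) : Prop :=
  ∀ v : H, w ≤ v → ∃ v' : H, w ≤ v' ∧ v ⊔ v' = ⊤ ∧ v ⊓ v' = w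

/-- An object is *minimal* if every morphism with that domain is a monomorphism. -/
def Minimal {C : Type u} [Category.{v} C] (c : C) : Prop :=
  ∀ ⦃d : C⦄ (f : c ⟶ d), Mono f

/-- An object is *preterminal* if there is at most one morphism into it from any object. -/
def Preterminal {C : Type u} [Category.{v} C] (c : C) : Prop :=
  ∀ ⦃b : C⦄ (u v : b ⟶ c), u = v

/-- The category of elements `C/X` of a presheaf `X`: objects are pairs `(x, D)`
with `x ∈ X(D)`. -/
structure Elem {C : Type u} [Category.{v} C] (X : Cᵒᵖ ⥤ Type w) : Type max u w where
  base : C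
  elt : X.obj (op base)

/-- Morphisms `(x, D) → (y, E)` in `C/X` are morphisms `f : D → E` of `C` with
`X(f)(y) = x`. -/
instance {C : Type u} [Category.{v} C] (X : Cᵒᵖ ⥤ Type w) : Category (Elem X) where
  Hom a b := {f : a.base ⟶ b.base // X.map f.op b.elt = a.elt}
  id a := ⟨𝟙 a.base, by simp⟩
  comp {a b c} f g := ⟨f.1 ≫ g.1, by
    rw [op_comp, FunctorToTypes.map_comp_apply, g.2, f.2]⟩
  id_comp f := Subtype.ext (Category.id_comp f.1)
  comp_id f := Subtype.ext (Category.comp_id f.1)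
  assoc f g h := Subtype.ext (Category.assoc f.1 g.1 h.1)

/-- A presheaf is *strongly regular* if for every monomorphism of `C/X`
with minimal codomain, the domain is also minimal. -/
def StronglyRegular {C : Type u} [Category.{v} C] (X : Cᵒᵖ ⥤ Type w) : Prop :=
  ∀ ⦃a b : Elem X⦄ (m : a ⟶ b), Mono m → Minimal b → Minimal a

/-- A presheaf is *non-singular* if every minimal object of `C/X` is preterminal. -/
def NonSingular {C : Type u} [Category.{v} C] (X : Cᵒᵖ ⥤ Type w) : Prop :=
  ∀ a : Elem X, Minimal a → Preterminal a

/-- Every morphism factors as a split epimorphism followed by a monomorphism. -/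
def SplitEpiMonoFact (C : Type u) [Category.{v} C] : Prop :=
  ∀ ⦃a b : C⦄ (f : a ⟶ b), ∃ (c : C) (e : a ⟶ c) (m : c ⟶ b),
    IsSplitEpi e ∧ Mono m ∧ e ≫ m = f

/-- Every morphism factors as a strong epimorphism followed by a monomorphism. -/
def StrongEpiMonoFact (C : Type u) [Category.{v} C] : Prop :=
  ∀ ⦃a b : C⦄ (f : a ⟶ b), ∃ (c : C) (e : a ⟶ c) (m : c ⟶ b),
    StrongEpi e ∧ Mono m ∧ e ≫ m = f

/-- The ascending chain condition: every `ℕ`-indexed chain of monomorphisms lying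
over a fixed object via compatible monomorphisms contains an isomorphism. -/
def AscendingChainCondition (C : Type u) [Category.{v} C] : Prop :=
  ∀ (obj : ℕ → C) (c : C) (m : ∀ k : ℕ, obj k ⟶ obj (k + 1)) (i : ∀ k : ℕ, obj k ⟶ c),
    (∀ k, Mono (m k)) → (∀ k, Mono (i k)) → (∀ k, m k ≫ i (k + 1) = i k) →
    ∃ t : ℕ, IsIso (m t)

/-- A category is *well-founded* if every `ℕ`-indexed chain of strong epimorphisms
is eventually constant. -/
def WellFoundedCat (C : Type u) [Category.{v} C] : Prop :=
  ∀ (obj : ℕ → C) (e : ∀ k : ℕ, obj k ⟶ obj (k + 1)),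
    (∀ k, StrongEpi (e k)) → ∃ k : ℕ, ∀ m : ℕ, k ≤ m → IsIso (e m)

/-- `𝔥 c ≤ n`: in every sequence of `n+1` composable monomorphisms ending at `c`,
at least one is an isomorphism. -/
def HeightLE {C : Type u} [Category.{v} C] (c : C) (n : ℕ) : Prop :=
  ∀ (obj : Fin (n + 2) → C) (f : ∀ i : Fin (n + 1), obj i.succ ⟶ obj i.castSucc),
    (∀ i, Mono (f i)) → obj 0 = c → ∃ i, IsIso (f i)

/-- Every sequence of `n+1` composable morphisms in `C` contains an isomorphism. -/
def ChainsContainIso (C : Type u) [Category.{v} C] (n : ℕ) : Prop :=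
  ∀ (obj : Fin (n + 2) → C) (f : ∀ i : Fin (n + 1), obj i.succ ⟶ obj i.castSucc),
    ∃ i, IsIso (f i)

/-- The full subcategory of `C/X` determined by the minimal objects. -/
abbrev MinimalElems {C : Type u} [Category.{v} C] (X : Cᵒᵖ ⥤ Type w) :=
  ObjectProperty.FullSubcategory (fun a : Elem X => Minimal a)

/-- A morphism factors through an object of height below `n`. -/
def FactorsThroughHeightLE {C : Type u} [Category.{v} C] {a b : C} (f : a ⟶ b) (n : ℕ) : Prop :=
  ∃ (c : C) (v : a ⟶ c) (u : c ⟶ b), HeightLE c n ∧ v ≫ u = f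

/-- `dim X ≤ n`: every element of `X` is the restriction of an element along a morphism
factoring through an object of height below `n` (i.e. `X` is `n`-skeletal). -/
def DimLE {C : Type u} [Category.{v} C] (X : Cᵒᵖ ⥤ Type w) (n : ℕ) : Prop :=
  ∀ (D : C) (x : X.obj (op D)), ∃ (E : C) (f : D ⟶ E) (y : X.obj (op E)),
    FactorsThroughHeightLE f n ∧ X.map f.op y = x

/-- A two-sided ideal of morphisms of a category. -/
def IsIdeal {C : Type u} [Category.{v} C] (I : MorphismProperty C) : Prop :=
  ∀ ⦃a b c d : C⦄ (h : a ⟶ b) (f : b ⟶ c) (g : c ⟶ d), I f → I (h ≫ f ≫ g)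

/-- An idempotent ideal: every member factors as a composite of two members. -/
def IsIdempotentIdeal {C : Type u} [Category.{v} C] (I : MorphismProperty C) : Prop :=
  IsIdeal I ∧ ∀ ⦃a b : C⦄ (f : a ⟶ b), I f →
    ∃ (c : C) (h : a ⟶ c) (g : c ⟶ b), I h ∧ I g ∧ h ≫ g = f

/-- The implication sieve `V ⇒ W`. -/
def sieveImp {C : Type u} [Category.{v} C] {D : C} (V W : Sieve D) : Sieve D where
  arrows F h := ∀ ⦃G : C⦄ (g : G ⟶ F), V.arrows (g ≫ h) → W.arrows (g ≫ h)
  downward_closed := by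
    intro F F' h hh g G' g' hv
    have := hh (g' ≫ g) (by simpa using hv)
    simpa using this

/-- `W` is a subpresheaf of `X` given as a family of subsets closed under the action. -/
def IsSubpresheaf {C : Type u} [Category.{v} C] (X : Cᵒᵖ ⥤ Type w)
    (W : ∀ D : Cᵒᵖ, Set (X.obj D)) : Prop :=
  ∀ ⦃D E : Cᵒᵖ⦄ (f : D ⟶ E) ⦃x : X.obj D⦄, x ∈ W D → X.map f x ∈ W E

/-- The implication subpresheaf `(V ⇒ W)(D)`. -/
def impSet {C : Type u} [Category.{v} C] (X : Cᵒᵖ ⥤ Type w)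
    (V W : ∀ D : Cᵒᵖ, Set (X.obj D)) (D : Cᵒᵖ) : Set (X.obj D) :=
  {x | ∀ ⦃E : Cᵒᵖ⦄ (f : D ⟶ E), X.map f x ∈ V E → X.map f x ∈ W E}

/-- `Ξ_k`: the image subpresheaf of the map `C(-, K) → X` corresponding to `k`. -/
def xiSet {C : Type u} [Category.{v} C] (X : Cᵒᵖ ⥤ Type w) {K : C} (k : X.obj (op K))
    (J : Cᵒᵖ) : Set (X.obj J) :=
  {j | ∃ g : op K ⟶ J, X.map g k = j}

/-! In the interval `[w, ⊤]` the relative pseudo-complement of `v` is `v ⇨ w`: every `v'`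
with `v ⊓ v' ≤ w` lies below it, and `v ⊓ (v ⇨ w) = w`. Hence `v` has a complement there
iff `v ⇨ w` is one, i.e. iff `v ⊔ (v ⇨ w) = ⊤`. An arbitrary `v` is reduced to `w ⊔ v`,
which has the same value of `v ⊔ (v ⇨ w)`. -/

section HeytingAlgebra

variable {H : Type u} [HeytingAlgebra H] {v v' w : H}

theorem inf_himp_eq_of_le (h : w ≤ v) : v ⊓ (v ⇨ w) = w := by
  rw [inf_himp, inf_eq_right.mpr h]

theorem sup_himp_eq_top_of_inf_le (hsup : v ⊔ v' = ⊤) (hinf : v ⊓ v' ≤ w) :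
    v ⊔ (v ⇨ w) = ⊤ :=
  top_le_iff.mp (hsup ▸ sup_le_sup_left (le_himp_iff.mpr (inf_comm v' v ▸ hinf)) v)

theorem sup_sup_himp_sup_left (v w : H) : (w ⊔ v) ⊔ (w ⊔ v ⇨ w) = v ⊔ (v ⇨ w) := by
  rw [sup_himp_self_left, sup_assoc, sup_eq_right]
  exact le_sup_of_le_right le_himp

end HeytingAlgebra

theorem widespread_iff_sup_himp_eq_top {H : Type u} [HeytingAlgebra H] (w : H) :
    Widespread w ↔ ∀ v : H, ⊤ ≤ v ⊔ (v ⇨ w) := by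
  constructor
  · intro hw v
    obtain ⟨v', -, hsup, hinf⟩ := hw (w ⊔ v) le_sup_left
    rw [← sup_sup_himp_sup_left]
    exact (sup_himp_eq_top_of_inf_le hsup hinf.le).ge
  · intro h v hwv
    exact ⟨v ⇨ w, le_himp, top_le_iff.mp (h v), inf_himp_eq_of_le hwv⟩

end PaperEtendue
end

section
/- Let D be a small category, X a presheaf on D, W a subpresheaf of X, D an object of D and x ∈ X(D). The following are equivalent: (1) for every subpresheaf V of X, x ∈ (V ⊔ (V ⇒ W))(D); (2) for every morphism f : E → D, x ∈ (Ξ_{X(f)(x)} ⊔ (Ξ_{X(f)(x)} ⇒ W))(D); (3) for every morphism f : E → D, either X(f)(x) ∈ W(E) or there exists g : D → E with X(f ∘ g)(x) = x. -/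
open CategoryTheory Opposite

universe w v u

namespace PaperEtendue

/-! `x ∈ Ξ_{x·f}` says exactly that `x` is a retract `x · f · g = x` of its restriction, and then
every subpresheaf containing `x · f` contains `x`. Since `Ξ_{x·f}` is itself a subpresheaf
containing `x · f`, testing (1) only on these representable images loses nothing. -/

section

variable {C : Type u} [Category.{v} C] (X : Cᵒᵖ ⥤ Type w)

lemma isSubpresheaf_xiSet {K : C} (k : X.obj (op K)) : IsSubpresheaf X (xiSet X k) := by
  rintro J J' φ _ ⟨g, rfl⟩
  exact ⟨g ≫ φ, Functor.map_comp_apply X g φ k⟩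

lemma mem_xiSet_self {K : C} (k : X.obj (op K)) : k ∈ xiSet X k (op K) :=
  ⟨𝟙 _, by simp⟩

lemma mem_xiSet_map_iff {D E : C} (f : E ⟶ D) (x : X.obj (op D)) :
    x ∈ xiSet X (X.map f.op x) (op D) ↔ ∃ g : D ⟶ E, X.map (g ≫ f).op x = x := by
  constructor
  · rintro ⟨g, hg⟩
    exact ⟨g.unop, by simpa using hg⟩
  · rintro ⟨g, hg⟩
    exact ⟨g.op, by simpa using hg⟩

lemma IsSubpresheaf.mem_of_map_mem_of_retract {V : ∀ E : Cᵒᵖ, Set (X.obj E)}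
    (hV : IsSubpresheaf X V) {D E : C} {x : X.obj (op D)} {f : E ⟶ D} (g : D ⟶ E)
    (hgf : X.map (g ≫ f).op x = x) (hf : X.map f.op x ∈ V (op E)) : x ∈ V (op D) := by
  rw [← hgf, op_comp, Functor.map_comp_apply]
  exact hV g.op hf

lemma mem_union_impSet_of_forall_map {V W : ∀ E : Cᵒᵖ, Set (X.obj E)}
    (hV : IsSubpresheaf X V) {D : C} {x : X.obj (op D)}
    (h : ∀ ⦃E : C⦄ (f : E ⟶ D),
      X.map f.op x ∈ W (op E) ∨ ∃ g : D ⟶ E, X.map (g ≫ f).op x = x) :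
    x ∈ V (op D) ∪ impSet X V W (op D) := by
  by_cases hx : x ∈ V (op D)
  · exact Or.inl hx
  · refine Or.inr fun E f hf => (h f.unop).resolve_right ?_
    rintro ⟨g, hgf⟩
    exact hx (hV.mem_of_map_mem_of_retract X g hgf hf)

end

theorem presheaf_gamma_tfae_general {C : Type u} [Category.{v} C] (X : Cᵒᵖ ⥤ Type w)
    (W : ∀ D : Cᵒᵖ, Set (X.obj D))
    (D : C) (x : X.obj (op D)) :
    List.TFAE [
      (∀ V : ∀ E : Cᵒᵖ, Set (X.obj E), IsSubpresheaf X V →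
        x ∈ V (op D) ∪ impSet X V W (op D)),
      (∀ ⦃E : C⦄ (f : E ⟶ D),
        x ∈ xiSet X (X.map f.op x) (op D) ∪ impSet X (xiSet X (X.map f.op x)) W (op D)),
      (∀ ⦃E : C⦄ (f : E ⟶ D),
        X.map f.op x ∈ W (op E) ∨ ∃ g : D ⟶ E, X.map (g ≫ f).op x = x) ] := by
  tfae_have 1 → 2 := fun h E f => h _ (isSubpresheaf_xiSet X _)
  tfae_have 2 → 3 := fun h E f =>
    (h f).symm.imp (fun himp => himp f.op (mem_xiSet_self X _)) (mem_xiSet_map_iff X f x).1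
  tfae_have 3 → 1 := fun h V hV => mem_union_impSet_of_forall_map X hV h
  tfae_finish

theorem presheaf_gamma_tfae {C : Type u} [Category.{v} C] (X : Cᵒᵖ ⥤ Type w)
    (W : ∀ D : Cᵒᵖ, Set (X.obj D)) (hW : IsSubpresheaf X W)
    (D : C) (x : X.obj (op D)) :
    List.TFAE [
      (∀ V : ∀ E : Cᵒᵖ, Set (X.obj E), IsSubpresheaf X V →
        x ∈ V (op D) ∪ impSet X V W (op D)),
      (∀ ⦃E : C⦄ (f : E ⟶ D),
        x ∈ xiSet X (X.map f.op x) (op D) ∪ impSet X (xiSet X (X.map f.op x)) W (op D)),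
      (∀ ⦃E : C⦄ (f : E ⟶ D),
        X.map f.op x ∈ W (op E) ∨ ∃ g : D ⟶ E, X.map (g ≫ f).op x = x) ] :=
  presheaf_gamma_tfae_general X W D x

end PaperEtendue
end

section
/- Let D be a small category, D an object of D and W a sieve on D. Then W is widespread (i.e. for every sieve V on D, V ⊔ (V ⇒ W) is the maximal sieve on D) if and only if for every morphism f : F → D, either f ∈ W or f has a section (there exists s : D → F with f ∘ s = id_D). -/
open CategoryTheory Opposite

universe w v u

namespace PaperEtendue

/-! `V ⊔ (V ⇒ W) = ⊤` says exactly that `V = ⊤` or `V ≤ W`. Testing this on the sieve generated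
by `f` gives the forward direction; conversely a proper sieve contains no morphism with a
section, so it lies inside `W`. -/

section

variable {C : Type u} [Category.{v} C] {D : C}

theorem _root_.CategoryTheory.Sieve.mem_generate_singleton_iff {F G : C} (f : F ⟶ D)
    (g : G ⟶ D) :
    Sieve.generate (Presieve.singleton f) g ↔ ∃ a : G ⟶ F, a ≫ f = g := by
  constructor
  · rintro ⟨_, a, _, ⟨⟩, rfl⟩
    exact ⟨a, rfl⟩
  · rintro ⟨a, rfl⟩
    exact ⟨F, a, f, Presieve.singleton_self f, rfl⟩

theorem id_mem_sieveImp_iff {V W : Sieve D} : sieveImp V W (𝟙 D) ↔ V ≤ W := by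
  simp only [sieveImp, Category.comp_id]
  rfl

theorem sup_sieveImp_eq_top_iff {V W : Sieve D} : V ⊔ sieveImp V W = ⊤ ↔ V = ⊤ ∨ V ≤ W := by
  rw [← Sieve.id_mem_iff_eq_top, Sieve.union_apply, Sieve.id_mem_iff_eq_top, id_mem_sieveImp_iff]

theorem _root_.CategoryTheory.Sieve.eq_top_of_mem_of_comp_eq_id {V : Sieve D} {F : C}
    {f : F ⟶ D} (hf : V f) {s : D ⟶ F} (hs : s ≫ f = 𝟙 D) : V = ⊤ := by
  rw [← Sieve.id_mem_iff_eq_top, ← hs]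
  exact V.downward_closed hf s

end

theorem widespread_sieve_iff {C : Type u} [Category.{v} C] {D : C} (W : Sieve D) :
    (∀ V : Sieve D, V ⊔ sieveImp V W = ⊤) ↔
      ∀ ⦃F : C⦄ (f : F ⟶ D), W.arrows f ∨ ∃ s : D ⟶ F, s ≫ f = 𝟙 D := by
  simp only [sup_sieveImp_eq_top_iff]
  constructor
  · intro hW F f
    rcases hW (Sieve.generate (Presieve.singleton f)) with hTop | hLe
    · right
      rwa [← Sieve.id_mem_iff_eq_top, Sieve.mem_generate_singleton_iff] at hTop
    · left
      exact hLe _ ((Sieve.mem_generate_singleton_iff f f).mpr ⟨𝟙 F, Category.id_comp f⟩)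
  · intro hW V
    refine or_iff_not_imp_left.mpr fun hV F f hf => (hW f).resolve_right ?_
    rintro ⟨s, hs⟩
    exact hV (V.eq_top_of_mem_of_comp_eq_id hf hs)

end PaperEtendue
end

section
/- Let D be a small category and U a sieve of objects of D (a set of objects such that for every morphism E → D, if D ∈ U then E ∈ U). Then for every object D of D the following are equivalent: (1) for every e : E → D and every f : F → E, either F ∈ U or f has a section; (2) for every c : C → D, either C ∈ U or c is an isomorphism. -/
open CategoryTheory Opposite

universe w v u

namespace PaperEtendue

/-! (2) ⇒ (1): if `e` and `f ≫ e` are isomorphisms, so is `f`.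
(1) ⇒ (2): applying (1) to `𝟙 D` and `c` yields a section `s` of `c`, applying it to `c` and `s`
yields a section of `s`, and a morphism whose section is itself split is an isomorphism.
In the remaining cases the sieve `U` contains the domain in question. -/

lemma isIso_of_comp_eq_id_of_comp_eq_id {C : Type u} [Category.{v} C] {X Y : C}
    {c : X ⟶ Y} {s : Y ⟶ X} {t : X ⟶ Y} (hs : s ≫ c = 𝟙 Y) (ht : t ≫ s = 𝟙 X) : IsIso c := by
  have hct : c = t := by rw [← Category.id_comp c, ← ht, Category.assoc, hs, Category.comp_id]
  exact ⟨s, hct ▸ ht, hs⟩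

theorem object_sieve_gamma_iff {Dc : Type u} [Category.{v} Dc] (U : Set Dc)
    (hU : ∀ ⦃E D : Dc⦄, (E ⟶ D) → D ∈ U → E ∈ U) (D : Dc) :
    (∀ ⦃E : Dc⦄ (_ : E ⟶ D) ⦃F : Dc⦄ (f : F ⟶ E), F ∈ U ∨ ∃ s : E ⟶ F, s ≫ f = 𝟙 E) ↔
      ∀ ⦃C' : Dc⦄ (c : C' ⟶ D), C' ∈ U ∨ IsIso c := by
  constructor
  · intro h C' c
    rcases h (𝟙 D) c with hC' | ⟨s, hs⟩
    · exact Or.inl hC'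
    rcases h c s with hD | ⟨t, ht⟩
    · exact Or.inl (hU c hD)
    · exact Or.inr (isIso_of_comp_eq_id_of_comp_eq_id hs ht)
  · intro h E e F f
    rcases h e with hE | he
    · exact Or.inl (hU f hE)
    rcases h (f ≫ e) with hF | hfe
    · exact Or.inl hF
    have : IsIso f := IsIso.of_isIso_comp_right f e
    exact Or.inr ⟨inv f, IsIso.inv_hom_id f⟩

end PaperEtendue
end

section
/- Let C be a category in which every morphism factors as a split epimorphism followed by a monomorphism, and let B be a full subcategory of C in which every morphism is a monomorphism. Then every object of B is minimal in C, i.e. every morphism of C whose domain lies in B is a monomorphism in C. -/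
open CategoryTheory Opposite

universe w v u

namespace PaperEtendue

section

variable {D : Type u} [Category.{v} D]

lemma eq_id_of_mono_of_idem {X : D} (p : X ⟶ X) [Mono p] (hp : p ≫ p = p) : p = 𝟙 X :=
  (cancel_mono p).1 (by rw [hp, Category.id_comp])

lemma eq_id_of_idem_of_mono_homMk {P : ObjectProperty D} {X : P.FullSubcategory}
    (p : X.obj ⟶ X.obj) [Mono (ObjectProperty.homMk p : X ⟶ X)] (hp : p ≫ p = p) :
    p = 𝟙 X.obj :=
  congrArg InducedCategory.Hom.hom <|
    eq_id_of_mono_of_idem (ObjectProperty.homMk p : X ⟶ X) (by ext; exact hp)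

lemma isIso_of_isSplitEpi_of_idem_eq_id {X Y : D} (hX : ∀ p : X ⟶ X, p ≫ p = p → p = 𝟙 X)
    (e : X ⟶ Y) [IsSplitEpi e] : IsIso e :=
  ⟨section_ e, hX _ (by simp), IsSplitEpi.id e⟩

lemma minimal_of_forall_isSplitEpi_isIso (hfact : SplitEpiMonoFact D) {X : D}
    (hX : ∀ ⦃Y : D⦄ (e : X ⟶ Y), IsSplitEpi e → IsIso e) : Minimal X := by
  intro Y f
  obtain ⟨Z, e, m, he, hm, rfl⟩ := hfact f
  have := hX e he
  exact mono_comp e m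

end

theorem minimal_of_mem_monic_fullSubcategory {C : Type u} [Category.{v} C]
    (hfact : SplitEpiMonoFact C) (B : Set C)
    (hB : ∀ (a b : ObjectProperty.FullSubcategory (· ∈ B)) (f : a ⟶ b), Mono f)
    (b : C) (hb : b ∈ B) : Minimal b := by
  let b' : ObjectProperty.FullSubcategory (· ∈ B) := ⟨b, hb⟩
  have hidem (p : b ⟶ b) (hp : p ≫ p = p) : p = 𝟙 b :=
    have := hB b' b' (ObjectProperty.homMk p)
    eq_id_of_idem_of_mono_homMk (X := b') p hp
  exact minimal_of_forall_isSplitEpi_isIso hfact fun _ e _ ↦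
    isIso_of_isSplitEpi_of_idem_eq_id hidem e

end PaperEtendue
end

section
/- Let C be a category in which every morphism factors as a split epimorphism followed by a monomorphism, and let I be an idempotent ideal of morphisms of C. Then every h ∈ I factors as h = i ∘ j with i, j ∈ I and i a monomorphism. -/
open CategoryTheory Opposite

universe w v u

namespace PaperEtendue

/-! Write `h = j' ≫ g'` with `j', g' ∈ I` and factor `g' = e ≫ m` with `e` split epi and `m` mono.
Then `m = s ≫ g'` for a section `s` of `e`, so `m ∈ I`, and `h = (j' ≫ e) ≫ m`. -/

namespace IsIdeal

variable {C : Type u} [Category.{v} C] {I : MorphismProperty C}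

theorem comp_left (hI : IsIdeal I) {a b c : C} (h : a ⟶ b) {f : b ⟶ c} (hf : I f) :
    I (h ≫ f) := by
  simpa using hI h f (𝟙 c) hf

theorem comp_right (hI : IsIdeal I) {a b c : C} {f : a ⟶ b} (hf : I f) (g : b ⟶ c) :
    I (f ≫ g) := by
  simpa using hI (𝟙 a) f g hf

theorem of_isSplitEpi_comp (hI : IsIdeal I) {a b c : C} {e : a ⟶ b} [IsSplitEpi e]
    {m : b ⟶ c} (hem : I (e ≫ m)) : I m := by
  simpa using hI.comp_left (section_ e) hem

theorem exists_mono_factorization_mem (hI : IsIdeal I) (hfact : SplitEpiMonoFact C)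
    {a b : C} {f : a ⟶ b} (hf : I f) :
    ∃ (c : C) (e : a ⟶ c) (m : c ⟶ b), I m ∧ Mono m ∧ e ≫ m = f := by
  obtain ⟨c, e, m, he, hm, rfl⟩ := hfact f
  exact ⟨c, e, m, hI.of_isSplitEpi_comp hf, hm, rfl⟩

end IsIdeal

theorem idempotentIdeal_mono_factorization {C : Type u} [Category.{v} C]
    (hfact : SplitEpiMonoFact C) (I : MorphismProperty C) (hI : IsIdempotentIdeal I)
    {a b : C} (h : a ⟶ b) (hh : I h) :
    ∃ (c : C) (j : a ⟶ c) (i : c ⟶ b), I j ∧ I i ∧ Mono i ∧ j ≫ i = h := by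
  obtain ⟨hIdeal, hIdem⟩ := hI
  obtain ⟨c', j', g', hj', hg', rfl⟩ := hIdem h hh
  obtain ⟨c, e, m, hm, hmono, rfl⟩ := hIdeal.exists_mono_factorization_mem hfact hg'
  exact ⟨c, j' ≫ e, m, hIdeal.comp_right hj' e, hm, hmono, Category.assoc _ _ _⟩

end PaperEtendue
end

section
/- Let C be a small category such that (1) every morphism factors as a split epimorphism followed by a monomorphism and (2) C satisfies the ascending chain condition. Let I be an idempotent ideal of morphisms of C. Then a morphism f of C belongs to I if and only if f factors through some object B of C with id_B ∈ I. -/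
/-!
Splitting an element of an idempotent ideal `I` as a product of two elements of `I` and then
taking the split-epi/mono factorisation of the second factor shows that every mono `i ∈ I` factors
as `n ≫ i'` with `n, i'` monos in `I`. Iterating from a mono factor of `f` gives an ascending chain
of subobjects of the codomain through which `f` factors; by the ascending chain condition some
link `n` is an isomorphism, and then `𝟙 = inv n ≫ n ∈ I`.
-/

open CategoryTheory Opposite

universe w v u

namespace PaperEtendue

section

variable {C : Type u} [Category.{v} C]

namespace IsIdeal

variable {I : MorphismProperty C} (hI : IsIdeal I) {a b c : C}
include hI

theorem comp_mem_left (h : a ⟶ b) {f : b ⟶ c} (hf : I f) : I (h ≫ f) := by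
  simpa using hI h f (𝟙 c) hf

theorem comp_mem_right {f : a ⟶ b} (hf : I f) (g : b ⟶ c) : I (f ≫ g) := by
  simpa using hI (𝟙 a) f g hf

theorem comp_mem_of_id_mem (hB : I (𝟙 b)) (u : a ⟶ b) (v : b ⟶ c) : I (u ≫ v) := by
  simpa using hI u (𝟙 b) v hB

theorem id_mem_of_isIso {f : a ⟶ b} [IsIso f] (hf : I f) : I (𝟙 b) := by
  simpa using hI.comp_mem_left (inv f) hf

theorem mem_of_isSplitEpi_comp {e : a ⟶ b} [IsSplitEpi e] {m : b ⟶ c} (h : I (e ≫ m)) : I m := by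
  simpa using hI.comp_mem_left (section_ e) h

end IsIdeal

theorem IsIdempotentIdeal.exists_fac_mono_mem (hfact : SplitEpiMonoFact C)
    {I : MorphismProperty C} (hI : IsIdempotentIdeal I) {a b : C} {f : a ⟶ b} (hf : I f) :
    ∃ (c : C) (w : a ⟶ c) (i : c ⟶ b), I w ∧ Mono i ∧ I i ∧ w ≫ i = f := by
  obtain ⟨x, h, g, hh, hg, rfl⟩ := hI.2 f hf
  obtain ⟨c, e, m, he, hm, rfl⟩ := hfact g
  exact ⟨c, h ≫ e, m, hI.1.comp_mem_right hh e, hm, hI.1.mem_of_isSplitEpi_comp hg,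
    Category.assoc _ _ _⟩

theorem AscendingChainCondition.exists_isIso_of_forall_exists_mono
    (hacc : AscendingChainCondition C) {b : C} (P : Over b → Prop) (Q : MorphismProperty C)
    (hP : ∀ X, P X → Mono X.hom)
    (hstep : ∀ X, P X → ∃ (Y : Over b) (n : X ⟶ Y), P Y ∧ Mono n.left ∧ Q n.left)
    (X₀ : Over b) (h₀ : P X₀) :
    ∃ (X Y : Over b) (n : X ⟶ Y), P Y ∧ IsIso n.left ∧ Q n.left := by
  choose next n hn using fun X : {X // P X} => hstep X.1 X.2
  let chain : ℕ → {X // P X} := fun k =>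
    Nat.rec ⟨X₀, h₀⟩ (fun _ X => ⟨next X, (hn X).1⟩) k
  obtain ⟨t, ht⟩ := hacc (fun k => (chain k).1.left) b (fun k => (n (chain k)).left)
    (fun k => (chain k).1.hom) (fun k => (hn _).2.1) (fun k => hP _ (chain k).2)
    (fun k => Over.w (n (chain k)))
  exact ⟨_, _, n (chain t), (chain (t + 1)).2, ht, (hn _).2.2⟩

end

theorem idempotentIdeal_mem_iff_factors_through_unit {C : Type u} [Category.{v} C]
    (hfact : SplitEpiMonoFact C) (hacc : AscendingChainCondition C)
    (I : MorphismProperty C) (hI : IsIdempotentIdeal I)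
    {a b : C} (f : a ⟶ b) :
    I f ↔ ∃ (B : C) (u : a ⟶ B) (v : B ⟶ b), I (𝟙 B) ∧ u ≫ v = f := by
  refine ⟨fun hf => ?_, fun ⟨B, u, v, hB, huv⟩ => huv ▸ hI.1.comp_mem_of_id_mem hB u v⟩
  let P : Over b → Prop := fun X => Mono X.hom ∧ I X.hom ∧ ∃ w, w ≫ X.hom = f
  have hstep : ∀ X, P X → ∃ (Y : Over b) (n : X ⟶ Y), P Y ∧ Mono n.left ∧ I n.left := by
    rintro X ⟨hX, hXI, w, hw⟩
    obtain ⟨c, n, i, hnI, hi, hiI, hni⟩ := hI.exists_fac_mono_mem hfact hXI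
    have hn : Mono n := mono_of_mono_fac hni
    exact ⟨Over.mk i, Over.homMk n hni, ⟨hi, hiI, w ≫ n, by simp [hni, hw]⟩, hn, hnI⟩
  obtain ⟨c₀, w₀, i₀, -, hi₀, hi₀I, hw₀⟩ := hI.exists_fac_mono_mem hfact hf
  obtain ⟨X, Y, n, ⟨-, -, w, hw⟩, hiso, hnI⟩ :=
    hacc.exists_isIso_of_forall_exists_mono P I (fun X hX => hX.1) hstep
      (Over.mk i₀) ⟨hi₀, hi₀I, w₀, hw₀⟩
  exact ⟨Y.left, w, Y.hom, hI.1.id_mem_of_isIso hnI, hw⟩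

end PaperEtendue
end

section
/- Let C be a small category in which every morphism factors as a split epimorphism followed by a monomorphism and which satisfies the ascending chain condition. Then for every presheaf X on C, the category of elements C/X also has the property that every morphism factors as a split epimorphism followed by a monomorphism, and C/X satisfies the ascending chain condition. -/
open CategoryTheory Opposite

universe w v u

namespace PaperEtendue

/-!
The projection `C/X ⥤ C` is faithful and reflects isomorphisms, and a factorization `e ≫ m`
in `C` of the underlying morphism of `f : a ⟶ b` lifts to `C/X` through the restriction of
`b` along `m`, the lift of `e` being split epi whenever `e` is. So `C/X` inherits split
epi–mono factorizations. For a monomorphism `f` of `C/X` the lifted split epi part is monic,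
hence an isomorphism, so the projection preserves monomorphisms: an ascending chain in `C/X`
projects to one in `C`, and the isomorphism found there is reflected back.
-/

lemma map_op_eq_of_comp_eq_id {C : Type u} [Category.{v} C] (X : Cᵒᵖ ⥤ Type w) {D E : C}
    {s : D ⟶ E} {f : E ⟶ D} (h : s ≫ f = 𝟙 D) {x : X.obj (op E)} {y : X.obj (op D)}
    (hxy : X.map f.op y = x) : X.map s.op x = y := by
  rw [← hxy, ← Functor.map_comp_apply, ← op_comp, h, op_id, Functor.map_id_apply]

namespace Elem

variable {C : Type u} [Category.{v} C] {X : Cᵒᵖ ⥤ Type w}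

lemma hom_ext {a b : Elem X} {f g : a ⟶ b} (h : f.1 = g.1) : f = g := Subtype.ext h

variable (X) in
def π : Elem X ⥤ C where
  obj := base
  map f := f.1

instance : (π X).Faithful where
  map_injective := hom_ext

instance : (π X).ReflectsIsomorphisms where
  reflects {a b} f (_ : IsIso f.1) := by
    exact ⟨⟨⟨inv f.1, map_op_eq_of_comp_eq_id X (IsIso.inv_hom_id f.1) f.2⟩,
      hom_ext (IsIso.hom_inv_id f.1), hom_ext (IsIso.inv_hom_id f.1)⟩⟩

lemma isSplitEpi_of_isSplitEpi_val {a b : Elem X} (f : a ⟶ b) (_ : IsSplitEpi f.1) :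
    IsSplitEpi f :=
  ⟨⟨⟨⟨section_ f.1, map_op_eq_of_comp_eq_id X (IsSplitEpi.id f.1) f.2⟩,
    hom_ext (IsSplitEpi.id f.1)⟩⟩⟩

def restrict (b : Elem X) {c : C} (m : c ⟶ b.base) : Elem X := ⟨c, X.map m.op b.elt⟩

def fromRestrict (b : Elem X) {c : C} (m : c ⟶ b.base) : restrict b m ⟶ b := ⟨m, rfl⟩

def toRestrict {a b : Elem X} (f : a ⟶ b) {c : C} (e : a.base ⟶ c) (m : c ⟶ b.base)
    (hf : e ≫ m = f.1) : a ⟶ restrict b m :=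
  ⟨e, by
    change X.map e.op (X.map m.op b.elt) = a.elt
    rw [← Functor.map_comp_apply, ← op_comp, hf, f.2]⟩

lemma toRestrict_comp_fromRestrict {a b : Elem X} (f : a ⟶ b) {c : C} (e : a.base ⟶ c)
    (m : c ⟶ b.base) (hf : e ≫ m = f.1) : toRestrict f e m hf ≫ fromRestrict b m = f :=
  hom_ext hf

variable (X) in
lemma splitEpiMonoFact (hfact : SplitEpiMonoFact C) : SplitEpiMonoFact (Elem X) := by
  intro a b f
  obtain ⟨c, e, m, _, _, hf⟩ := hfact f.1
  exact ⟨restrict b m, toRestrict f e m hf, fromRestrict b m,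
    isSplitEpi_of_isSplitEpi_val _ ‹IsSplitEpi e›, (π X).mono_of_mono_map ‹Mono m›,
    toRestrict_comp_fromRestrict f e m hf⟩

lemma mono_val_of_mono (hfact : SplitEpiMonoFact C) {a b : Elem X} (f : a ⟶ b) [Mono f] :
    Mono f.1 := by
  obtain ⟨c, e, m, _, _, hf⟩ := hfact f.1
  have : Mono (toRestrict f e m hf) := by
    have : Mono (toRestrict f e m hf ≫ fromRestrict b m) := by
      rwa [toRestrict_comp_fromRestrict]
    exact mono_of_mono _ (fromRestrict b m)
  have := isSplitEpi_of_isSplitEpi_val (toRestrict f e m hf) ‹IsSplitEpi e›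
  have : IsIso (toRestrict f e m hf) := isIso_of_mono_of_isSplitEpi _
  have : IsIso e := (π X).map_isIso (toRestrict f e m hf)
  rw [← hf]
  infer_instance

lemma preservesMonomorphisms_π (hfact : SplitEpiMonoFact C) : (π X).PreservesMonomorphisms :=
  ⟨fun f _ => mono_val_of_mono hfact f⟩

end Elem

lemma AscendingChainCondition.of_functor {C : Type u} [Category.{v} C] {D : Type*} [Category D]
    (F : D ⥤ C) [F.PreservesMonomorphisms] [F.ReflectsIsomorphisms]
    (h : AscendingChainCondition C) : AscendingChainCondition D := by
  intro obj c m i _ _ hcomm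
  obtain ⟨t, _⟩ := h (fun k => F.obj (obj k)) (F.obj c) (fun k => F.map (m k))
    (fun k => F.map (i k)) inferInstance inferInstance (fun k => by rw [← F.map_comp, hcomm])
  exact ⟨t, isIso_of_reflects_iso (m t) F⟩

theorem elem_splitEpiMonoFact_and_acc {C : Type u} [Category.{v} C]
    (hfact : SplitEpiMonoFact C) (hacc : AscendingChainCondition C) (X : Cᵒᵖ ⥤ Type w) :
    SplitEpiMonoFact (Elem X) ∧ AscendingChainCondition (Elem X) := by
  have := Elem.preservesMonomorphisms_π (X := X) hfact
  exact ⟨Elem.splitEpiMonoFact X hfact, hacc.of_functor (Elem.π X)⟩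

end PaperEtendue
end

section
/- Let C be a small category in which every morphism factors as a strong epimorphism followed by a monomorphism. For any presheaf X on C, any object D of C, any x ∈ X(D) and any n ∈ ℕ, the following are equivalent: (1) there exist a morphism f : D → E of C that factors through an object of height below n, and y ∈ X(E), such that x = X(f)(y); (2) there exist a strong epimorphism g : D → C' with 𝔥C' ≤ n and z ∈ X(C') such that x = X(g)(z). -/
open CategoryTheory Opposite

universe w v u

namespace PaperEtendue

/- Height does not increase along monomorphisms: a chain of monos ending at a subobject
`m : a ↣ b` extends to one ending at `b` by composing its last step with `m`, and `f ≫ m` is an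
isomorphism only if `f` is. So if `f = v ≫ u` with `v : D ⟶ c` and `𝔥 c ≤ n`, the
(strong epi, mono) factorization `v = e ≫ m` exhibits `x` as a restriction along the strong
epimorphism `e` onto a subobject of `c`. -/

lemma isIso_of_isIso_comp_of_mono {C : Type u} [Category.{v} C] {a b c : C}
    (f : a ⟶ b) (m : b ⟶ c) [hm : Mono m] [IsIso (f ≫ m)] : IsIso f := by
  have : IsSplitEpi m := IsSplitEpi.mk' ⟨inv (f ≫ m) ≫ f, by simp⟩
  have := isIso_of_mono_of_isSplitEpi m
  exact IsIso.of_isIso_comp_right f m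

lemma HeightLE.of_mono {C : Type u} [Category.{v} C] {a b : C} (m : a ⟶ b) (hm : Mono m)
    {n : ℕ} (hb : HeightLE b n) : HeightLE a n := by
  rintro obj f hf rfl
  let obj' : Fin (n + 2) → C := Fin.cons b (fun j => obj j.succ)
  let f' : ∀ i : Fin (n + 1), obj' i.succ ⟶ obj' i.castSucc :=
    Fin.cases (motive := fun i => obj' i.succ ⟶ obj' i.castSucc) (f 0 ≫ m) (fun j => f j.succ)
  have hf' : ∀ i, Mono (f' i) := Fin.cases (mono_comp' (hf 0) hm) (fun j => hf j.succ)
  obtain ⟨i, hi⟩ := hb obj' f' hf' rfl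
  cases i using Fin.cases with
  | zero =>
    have : IsIso (f 0 ≫ m) := hi
    -- `f 0` and `m` meet at `obj (Fin.castSucc 0)` vs `obj 0`, so instance search misses `Mono m`
    exact ⟨0, isIso_of_isIso_comp_of_mono (f 0) m (hm := hm)⟩
  | succ j => exact ⟨j.succ, hi⟩

lemma FactorsThroughHeightLE.exists_strongEpi {C : Type u} [Category.{v} C]
    (hfact : StrongEpiMonoFact C) {a b : C} {f : a ⟶ b} {n : ℕ}
    (hf : FactorsThroughHeightLE f n) :
    ∃ (c : C) (e : a ⟶ c) (w : c ⟶ b), StrongEpi e ∧ HeightLE c n ∧ e ≫ w = f := by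
  obtain ⟨c, v, u, hc, rfl⟩ := hf
  obtain ⟨c', e, m, he, hm, rfl⟩ := hfact v
  exact ⟨c', e, m ≫ u, he, hc.of_mono m hm, (Category.assoc _ _ _).symm⟩

lemma factorsThroughHeightLE_of_heightLE {C : Type u} [Category.{v} C] {a b : C} (f : a ⟶ b)
    {n : ℕ} (hb : HeightLE b n) : FactorsThroughHeightLE f n :=
  ⟨b, f, 𝟙 b, hb, Category.comp_id f⟩

theorem skeleton_membership_iff {C : Type u} [Category.{v} C]
    (hfact : StrongEpiMonoFact C) (X : Cᵒᵖ ⥤ Type w) (D : C) (x : X.obj (op D)) (n : ℕ) :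
    (∃ (E : C) (f : D ⟶ E) (y : X.obj (op E)),
        FactorsThroughHeightLE f n ∧ X.map f.op y = x) ↔
      ∃ (C' : C) (g : D ⟶ C') (z : X.obj (op C')),
        StrongEpi g ∧ HeightLE C' n ∧ X.map g.op z = x := by
  constructor
  · rintro ⟨E, f, y, hf, rfl⟩
    obtain ⟨c, e, w, he, hc, rfl⟩ := hf.exists_strongEpi hfact
    exact ⟨c, e, X.map w.op y, he, hc, by simp⟩
  · rintro ⟨C', g, z, -, hC', rfl⟩
    exact ⟨C', g, z, factorsThroughHeightLE_of_heightLE g hC', rfl⟩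

end PaperEtendue
end

section
/- Let C be a small well-founded category in which every morphism factors as a strong epimorphism followed by a monomorphism. Then for every presheaf X on C, every object C' of C and every x ∈ X(C'), there exist a strong epimorphism e : C' → D in C and an element y ∈ X(D) with x = X(e)(y) such that (y, D) is a minimal object of the category of elements C/X. -/
open CategoryTheory Opposite

universe w v u

namespace PaperEtendue

/-!
If `(x, C')` is not minimal, some morphism out of it is not a monomorphism, and the strong
epimorphism in its factorisation is not invertible and carries `x` to an element over its
codomain. Iterating produces a chain of strong epimorphisms, which well-foundedness of `C`
forces to stop, and it can only stop at a minimal element.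
-/

section WellFounded

variable {C : Type u} [Category.{v} C]

theorem WellFoundedCat.isEmpty_of_descent (hwf : WellFoundedCat C)
    {α : Type*} (obj : α → C)
    (h : ∀ a, ∃ (b : α) (e : obj a ⟶ obj b), StrongEpi e ∧ ¬ IsIso e) : IsEmpty α := by
  choose next e he hne using h
  refine ⟨fun a => ?_⟩
  let chain : ℕ → α := fun n => Nat.rec a (fun _ => next) n
  obtain ⟨k, hk⟩ := hwf (fun n => obj (chain n)) (fun n => e (chain n)) (fun n => he _)
  exact hne _ (hk k le_rfl)

theorem WellFoundedCat.exists_strongEpi_map_of_descent (hwf : WellFoundedCat C)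
    {E : Type*} [Category E] (F : E ⥤ C) (P : E → Prop)
    (step : ∀ a, ¬ P a → ∃ (b : E) (f : a ⟶ b), StrongEpi (F.map f) ∧ ¬ IsIso (F.map f))
    (a : E) : ∃ (b : E) (f : a ⟶ b), StrongEpi (F.map f) ∧ P b := by
  by_contra! hno
  have hempty := hwf.isEmpty_of_descent
    (α := {b : E // ∃ f : a ⟶ b, StrongEpi (F.map f)}) (fun b => F.obj b.1) (by
      rintro ⟨b, f, hf⟩
      obtain ⟨b', g, hg, hng⟩ := step b (hno b f hf)
      exact ⟨⟨b', f ≫ g, by rw [F.map_comp]; exact strongEpi_comp _ _⟩, F.map g, hg, hng⟩)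
  exact hempty.false ⟨a, 𝟙 a, by rw [F.map_id]; infer_instance⟩

end WellFounded

namespace Elem

variable {C : Type u} [Category.{v} C] {X : Cᵒᵖ ⥤ Type w}

variable (X) in
def forget : Elem X ⥤ C where
  obj a := a.base
  map f := f.1

theorem mono_of_mono_base {a b : Elem X} (f : a ⟶ b) [Mono f.1] : Mono f :=
  ⟨fun _ _ hgh => Subtype.ext ((cancel_mono f.1).mp (congrArg Subtype.val hgh))⟩

theorem exists_strongEpi_not_isIso_of_not_minimal (hfact : StrongEpiMonoFact C) {a : Elem X}
    (ha : ¬ Minimal a) : ∃ (b : Elem X) (f : a ⟶ b), StrongEpi f.1 ∧ ¬ IsIso f.1 := by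
  obtain ⟨d, f, hf⟩ : ∃ (d : Elem X) (f : a ⟶ d), ¬ Mono f := by simpa [Minimal] using ha
  obtain ⟨c, e, m, he, hm, hem⟩ := hfact f.1
  refine ⟨⟨c, X.map m.op d.elt⟩, ⟨e, ?_⟩, he, fun _ => hf ?_⟩
  · rw [← Functor.map_comp_apply, ← op_comp, hem, f.2]
  · have : Mono f.1 := hem ▸ mono_comp e m
    exact mono_of_mono_base f

end Elem

theorem exists_strongEpi_to_minimal {C : Type u} [Category.{v} C]
    (hwf : WellFoundedCat C) (hfact : StrongEpiMonoFact C)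
    (X : Cᵒᵖ ⥤ Type w) (C' : C) (x : X.obj (op C')) :
    ∃ (D : C) (e : C' ⟶ D) (y : X.obj (op D)),
      StrongEpi e ∧ X.map e.op y = x ∧ Minimal (⟨D, y⟩ : Elem X) := by
  obtain ⟨b, f, hf, hb⟩ := hwf.exists_strongEpi_map_of_descent (Elem.forget X) Minimal
    (fun _ ha => Elem.exists_strongEpi_not_isIso_of_not_minimal hfact ha) ⟨C', x⟩
  exact ⟨b.base, f.1, b.elt, hf, f.2, hb⟩

end PaperEtendue
end
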